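/- There is no unilateral weighted shift W_λ in ℓ²(ℕ) with all weights nonzero that is C-symmetric with respect to a conjugation C satisfying C eₙ ∈ dom(W_λ) for all n ∈ ℕ. -/

import Mathlib

open InnerProductSpace in
/-- A conjugation on a complex inner product space: an antilinear involution
satisfying `⟪Cf, Cg⟫ = ⟪g, f⟫`. -/
structure Conjugation (H : Type*) [NormedAddCommGroup H] [InnerProductSpace ℂ H] where
  toFun : H → H
  map_add' : ∀ x y, toFun (x + y) = toFun x + toFun y
  map_smul' : ∀ (c : ℂ) (x : H), toFun (c • x) = (starRingEnd ℂ c) • toFun x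
  invol : ∀ x, toFun (toFun x) = x
  inner_map : ∀ x y, (inner ℂ (toFun x) (toFun y) : ℂ) = inner ℂ y x

/-- `T` is `C`-symmetric: `T ⊆ C T* C`. -/
noncomputable def CSymmetric {H : Type*} [NormedAddCommGroup H] [InnerProductSpace ℂ H]
    [CompleteSpace H] (C : Conjugation H) (T : H →ₗ.[ℂ] H) : Prop :=
  ∀ x : T.domain, ∃ hx : C.toFun x ∈ T.adjoint.domain,
    C.toFun (T.adjoint ⟨C.toFun x, hx⟩) = T x

/-- `T` is `C`-selfadjoint: `T = C T* C`. -/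
noncomputable def CSelfAdjoint {H : Type*} [NormedAddCommGroup H] [InnerProductSpace ℂ H]
    [CompleteSpace H] (C : Conjugation H) (T : H →ₗ.[ℂ] H) : Prop :=
  CSymmetric C T ∧ ∀ y : H, C.toFun y ∈ T.adjoint.domain → y ∈ T.domain

/-- Composition of partially defined linear maps, with its natural (maximal) domain. -/
noncomputable def LinearPMap.pcomp {R E F G : Type*} [Ring R] [AddCommGroup E] [Module R E]
    [AddCommGroup F] [Module R F] [AddCommGroup G] [Module R G]
    (g : F →ₗ.[R] G) (f : E →ₗ.[R] F) : E →ₗ.[R] G :=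
  g.comp (f.domRestrict ((g.domain.comap f.toFun).map f.domain.subtype))
    (by
      rintro ⟨x, hx⟩
      obtain ⟨⟨y, hy, hyx⟩, hx2⟩ := id hx
      have h := LinearPMap.domRestrict_apply (f := f) (x := ⟨x, hx⟩) (y := y) (by exact hyx.symm)
      exact h ▸ hy)

/-- Natural powers of a partially defined linear map, `T^(n+1) = T ∘ T^n`, with
`T^0` the identity on the whole space. -/
noncomputable def LinearPMap.ppow {R E : Type*} [Ring R] [AddCommGroup E] [Module R E]
    (T : E →ₗ.[R] E) : ℕ → E →ₗ.[R] E
  | 0 => ⟨⊤, (⊤ : Submodule R E).subtype⟩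
  | n + 1 => T.pcomp (T.ppow n)

/-- `W` is the unilateral weighted shift in `ℓ²(ℕ)` with weights `lam` (0-indexed:
`W eₙ = lam n • e_{n+1}`): it has the maximal domain
`{f : Σ |lam n * f n|² < ∞}` and acts by `(W f)(n+1) = lam n * f n`, `(W f)(0) = 0`. -/
def IsWeightedShift (lam : ℕ → ℂ) (W : lp (fun _ : ℕ => ℂ) 2 →ₗ.[ℂ] lp (fun _ : ℕ => ℂ) 2) :
    Prop :=
  (∀ f : lp (fun _ : ℕ => ℂ) 2, f ∈ W.domain ↔ Memℓp (fun n => lam n * f n) 2) ∧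
  (∀ f : W.domain, (W f : lp (fun _ : ℕ => ℂ) 2) 0 = 0 ∧
    ∀ n : ℕ, (W f : lp (fun _ : ℕ => ℂ) 2) (n + 1) = lam n * (f : lp (fun _ : ℕ => ℂ) 2) n)

/-- The canonical orthonormal basis of `ℓ²(ℕ)` (0-indexed). -/
noncomputable def e (n : ℕ) : lp (fun _ : ℕ => ℂ) 2 := lp.single 2 n 1

/-
A conjugation `C` fixes `0`, so `C`-symmetry `C W^* C ⊇ W` at `x = C e₀ ∈ dom W` gives
`W x = C (W^* e₀)`. Since `W f` always vanishes at the first coordinate, `e₀` is orthogonal to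
the range of `W`, hence `W^* e₀ = 0` and `W x = 0`. Nonzero weights make `W` injective, so
`x = 0` and `e₀ = C x = 0`, which is absurd.
-/

theorem Conjugation.map_zero {H : Type*} [NormedAddCommGroup H] [InnerProductSpace ℂ H]
    (C : Conjugation H) : C.toFun 0 = 0 := by
  simpa using C.map_smul' 0 0

open LinearPMap in
theorem LinearPMap.adjoint_apply_eq_zero_of_inner_eq_zero {𝕜 E F : Type*} [RCLike 𝕜]
    [NormedAddCommGroup E] [InnerProductSpace 𝕜 E] [NormedAddCommGroup F] [InnerProductSpace 𝕜 F]
    [CompleteSpace E] {T : E →ₗ.[𝕜] F} (y : T†.domain)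
    (h : ∀ x : T.domain, inner 𝕜 (y : F) (T x) = 0) : T† y = 0 := by
  by_cases hT : Dense (T.domain : Set E)
  · exact adjoint_apply_eq hT y fun x => by rw [h, inner_zero_left]
  · exact adjoint_apply_of_not_dense hT y

theorem CSymmetric.apply_eq_zero {H : Type*} [NormedAddCommGroup H] [InnerProductSpace ℂ H]
    [CompleteSpace H] {C : Conjugation H} {T : H →ₗ.[ℂ] H} (hT : CSymmetric C T) (x : T.domain)
    (h : ∀ z : T.domain, inner ℂ (C.toFun x) (T z) = 0) : T x = 0 := by
  obtain ⟨hx, hTx⟩ := hT x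
  rw [← hTx, T.adjoint_apply_eq_zero_of_inner_eq_zero ⟨_, hx⟩ h, C.map_zero]

theorem e_ne_zero (n : ℕ) : e n ≠ 0 := by
  rw [← norm_ne_zero_iff, e, lp.norm_single two_pos, norm_one]
  exact one_ne_zero

namespace IsWeightedShift

variable {lam : ℕ → ℂ} {W : lp (fun _ : ℕ => ℂ) 2 →ₗ.[ℂ] lp (fun _ : ℕ => ℂ) 2}

theorem inner_e_zero_apply_eq_zero (hW : IsWeightedShift lam W) (f : W.domain) :
    inner ℂ (e 0) (W f) = 0 := by
  simp [e, lp.inner_single_left, (hW.2 f).1]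

theorem eq_zero_of_apply_eq_zero (hW : IsWeightedShift lam W) (hlam : ∀ n, lam n ≠ 0)
    (f : W.domain) (hf : W f = 0) : (f : lp (fun _ : ℕ => ℂ) 2) = 0 := by
  ext n
  have hn := (hW.2 f).2 n
  rw [hf] at hn
  exact (mul_eq_zero.mp (by simpa using hn.symm)).resolve_left (hlam n)

end IsWeightedShift

/-- there is no unilateral weighted shift with all weights nonzero which
is `C`-symmetric with respect to a conjugation `C` with `C eₙ ∈ dom W_λ` for all `n`. -/
theorem stmt_14 (lam : ℕ → ℂ) (hlam : ∀ n, lam n ≠ 0)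
    (W : lp (fun _ : ℕ => ℂ) 2 →ₗ.[ℂ] lp (fun _ : ℕ => ℂ) 2)
    (hW : IsWeightedShift lam W)
    (C : Conjugation (lp (fun _ : ℕ => ℂ) 2))
    (hdom : ∀ n : ℕ, C.toFun (e n) ∈ W.domain) :
    ¬ CSymmetric C W := by
  intro hsym
  set x : W.domain := ⟨C.toFun (e 0), hdom 0⟩
  have hCx : C.toFun x = e 0 := C.invol (e 0)
  have hWx : W x = 0 := hsym.apply_eq_zero x fun z => hCx ▸ hW.inner_e_zero_apply_eq_zero z
  have hx : (x : lp (fun _ : ℕ => ℂ) 2) = 0 := hW.eq_zero_of_apply_eq_zero hlam x hWx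
  exact e_ne_zero 0 (by rw [← hCx, hx, C.map_zero])
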